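/- arXiv:1701.01059 — 4 statements merged into one kernel-verified Lean document; each statement's English description precedes it below -/
import Mathlib

section
/- Let q be a prime power, m ≥ 1, and let w_0, …, w_{m−1} ∈ ℕ be positive weights. Let ω be a natural number with ω ≤ (q−1)(w_0 + ⋯ + w_{m−1}). Then the dimension of WRMC_ω(m,q) as an F_q-vector space equals the number of tuples (e_0, …, e_{m−1}) with 0 ≤ e_i ≤ q−1 for all i and Σ_{i=0}^{m−1} w_i e_i ≤ ω. -/
open MvPolynomial

/-- The weighted degree: total degree of `F(Y_0^{w_0}, …, Y_{m-1}^{w_{m-1}})`. -/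
noncomputable def wdeg {F : Type*} [CommSemiring F] {m : ℕ} (w : Fin m → ℕ)
    (f : MvPolynomial (Fin m) F) : ℕ :=
  ((MvPolynomial.bind₁ (fun l : Fin m => (MvPolynomial.X l : MvPolynomial (Fin m) F) ^ (w l))) f).totalDegree

/-- The weighted Reed–Muller code `WRMC_ω(m,q)` as a subspace of `F^{q^m}`. -/
noncomputable def WRMC (F : Type*) [CommSemiring F] [Fintype F] (m : ℕ) (w : Fin m → ℕ) (ω : ℕ) :
    Submodule F ((Fin m → F) → F) :=
  Submodule.span F
    {v | ∃ f : MvPolynomial (Fin m) F, wdeg w f ≤ ω ∧ v = fun P => MvPolynomial.eval P f}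

/-- The generalized Reed–Muller code `C_ω(m,q)`. -/
noncomputable def GRM (F : Type*) [CommSemiring F] [Fintype F] (m ω : ℕ) :
    Submodule F ((Fin m → F) → F) :=
  Submodule.span F
    {v | ∃ f : MvPolynomial (Fin m) F, f.totalDegree ≤ ω ∧ v = fun P => MvPolynomial.eval P f}

/-- The homogeneous Reed–Muller code `HRMC_d(m,q)`. -/
noncomputable def HRMC (F : Type*) [CommSemiring F] [Fintype F] (m d : ℕ) :
    Submodule F ((Fin m → F) → F) :=
  Submodule.span F
    {v | ∃ f : MvPolynomial (Fin m) F, f.IsHomogeneous d ∧ v = fun P => MvPolynomial.eval P f}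

/-- The ideal `(X_0^p - 1, …, X_{m-1}^p - 1)`. -/
noncomputable def Aideal (p m : ℕ) : Ideal (MvPolynomial (Fin m) (ZMod p)) :=
  Ideal.span (Set.range fun l : Fin m => (MvPolynomial.X l : MvPolynomial (Fin m) (ZMod p)) ^ p - 1)

/-- The modular algebra `A = F_p[X_0,…,X_{m-1}]/(X_0^p-1,…,X_{m-1}^p-1)`. -/
abbrev ModA (p m : ℕ) : Type := MvPolynomial (Fin m) (ZMod p) ⧸ Aideal p m

/-- `x_l`, the image of `X_l` in `A`. -/
noncomputable def xA (p m : ℕ) (l : Fin m) : ModA p m :=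
  Ideal.Quotient.mk (Aideal p m) (MvPolynomial.X l)

/-- The identification `ψ : F_p^{p^m} → A` sending `(c_j)` to `Σ_j c_j x_0^{j_0} ⋯ x_{m-1}^{j_{m-1}}`. -/
noncomputable def psi (p m : ℕ) [NeZero p] : ((Fin m → ZMod p) → ZMod p) →ₗ[ZMod p] ModA p m where
  toFun c := ∑ j : Fin m → ZMod p, c j • ∏ l, (xA p m l) ^ (j l).val
  map_add' a b := by simp [add_smul, Finset.sum_add_distrib]
  map_smul' r a := by simp [Finset.smul_sum, smul_smul]

/-- `b(η) = ∏_{l ∈ η} (x_l - 1)` in the binary algebra `A`. -/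
noncomputable def bElt (m : ℕ) (η : Finset (Fin m)) : ModA 2 m :=
  ∏ l ∈ η, (xA 2 m l - 1)


/-!
Over `F = 𝔽_q` the functions `x ↦ ∏ i, x i ^ e i` with `0 ≤ e i < q` form a basis of
`F^{F^m}`: they span it because every function is a polynomial function and `a ^ q = a`
lowers any exponent to one below `q`, and there are exactly `q ^ m` of them.
Since the weights are positive, substituting `Y_i ↦ Y_i ^ w_i` does not merge monomials, so
the weighted degree of `f` is the largest weighted degree `∑ i, w i * d i` of its monomials.
Lowering exponents only lowers weighted degrees, hence `WRMC_ω(m,q)` is spanned by the basis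
vectors with `∑ i, w i * e i ≤ ω`.
-/

open Submodule

theorem FiniteField.exists_pow_eq_pow_lt_card {F : Type*} [Field F] [Fintype F] (d : ℕ) :
    ∃ r ≤ d, r < Fintype.card F ∧ ∀ a : F, a ^ d = a ^ r := by
  induction d using Nat.strong_induction_on with
  | _ d ih =>
    set q := Fintype.card F
    by_cases hd : d < q
    · exact ⟨d, le_rfl, hd, fun _ => rfl⟩
    have hq : 1 < q := Fintype.one_lt_card
    obtain ⟨r, hr, hrq, hpow⟩ := ih (d - q + 1) (by omega)
    refine ⟨r, by omega, hrq, fun a => ?_⟩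
    calc a ^ d = a ^ (d - q) * a ^ q := by rw [← pow_add, Nat.sub_add_cancel (not_lt.mp hd)]
      _ = a ^ (d - q + 1) := by rw [FiniteField.pow_card, pow_succ]
      _ = a ^ r := hpow a

section MonomialEval

variable {σ F : Type*} [Fintype σ]

def monomialEval [CommMonoid F] (e : σ → ℕ) : (σ → F) → F :=
  fun x => ∏ i, x i ^ e i

lemma evalFun_eq_sum_monomialEval [CommSemiring F] (f : MvPolynomial σ F) :
    (fun x => eval x f) = ∑ d ∈ f.support, coeff d f • monomialEval d := by
  funext x
  simp only [eval_eq', Finset.sum_apply, Pi.smul_apply, smul_eq_mul, monomialEval]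

variable [Field F] [Fintype F]

lemma exists_monomialEval_eq (d : σ → ℕ) :
    ∃ e : σ → Fin (Fintype.card F), (∀ i, (e i : ℕ) ≤ d i) ∧
      monomialEval (F := F) d = monomialEval (e ·) := by
  choose r hr hrq hpow using fun i => FiniteField.exists_pow_eq_pow_lt_card (F := F) (d i)
  exact ⟨fun i => ⟨r i, hrq i⟩, hr, funext fun x =>
    Finset.prod_congr rfl fun i _ => hpow i (x i)⟩

lemma evalFun_mem_span_monomialEval (f : MvPolynomial σ F)
    (S : Set (σ → Fin (Fintype.card F)))
    (hS : ∀ d ∈ f.support, ∀ e : σ → Fin (Fintype.card F), (∀ i, (e i : ℕ) ≤ d i) → e ∈ S) :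
    (fun x => eval x f) ∈ span F ((fun e => monomialEval (e ·)) '' S) := by
  rw [evalFun_eq_sum_monomialEval]
  refine sum_mem fun d hd => smul_mem _ _ ?_
  obtain ⟨e, hle, he⟩ := exists_monomialEval_eq (F := F) d
  rw [he]
  exact subset_span ⟨e, hS d hd e hle, rfl⟩

lemma span_monomialEval_eq_top :
    span F (Set.range fun e : σ → Fin (Fintype.card F) => monomialEval (F := F) (e ·)) = ⊤ := by
  rw [eq_top_iff, ← map_restrict_dom_evalₗ]
  rintro _ ⟨f, -, rfl⟩
  rw [← Set.image_univ]
  exact evalFun_mem_span_monomialEval f _ fun _ _ _ _ => trivial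

lemma linearIndependent_monomialEval [DecidableEq σ] :
    LinearIndependent F fun e : σ → Fin (Fintype.card F) => monomialEval (F := F) (e ·) :=
  linearIndependent_of_top_le_span_of_card_eq_finrank span_monomialEval_eq_top.ge
    (by simp [Module.finrank_fintype_fun_eq_card])

end MonomialEval

section WeightedDegree

variable {F : Type*} [CommSemiring F] {m : ℕ} (w : Fin m → ℕ)

noncomputable def weightMul (d : Fin m →₀ ℕ) : Fin m →₀ ℕ :=
  Finsupp.equivFunOnFinite.symm (w * ⇑d)

lemma weightMul_injective (hw : ∀ i, 0 < w i) : Function.Injective (weightMul w) :=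
  fun _ _ h => Finsupp.ext fun i =>
    Nat.eq_of_mul_eq_mul_left (hw i) (DFunLike.congr_fun h i)

lemma sum_weightMul (d : Fin m →₀ ℕ) :
    ((weightMul w d).sum fun _ e => e) = ∑ i, w i * d i :=
  Finsupp.sum_fintype _ _ fun _ => rfl

lemma bind₁_X_pow_monomial (d : Fin m →₀ ℕ) (a : F) :
    bind₁ (fun i => (X i : MvPolynomial (Fin m) F) ^ w i) (monomial d a) =
      monomial (weightMul w d) a := by
  rw [bind₁_monomial, monomial_eq, Finsupp.prod_fintype _ _ fun _ => pow_zero _,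
    Finset.prod_subset d.support.subset_univ fun i _ hi => by
      rw [Finsupp.notMem_support_iff.mp hi, pow_zero]]
  simp [weightMul, pow_mul]

lemma coeff_weightMul_bind₁ (hw : ∀ i, 0 < w i) (f : MvPolynomial (Fin m) F)
    (d : Fin m →₀ ℕ) :
    coeff (weightMul w d) (bind₁ (fun i => (X i : MvPolynomial (Fin m) F) ^ w i) f) =
      coeff d f := by
  classical
  conv_lhs => rw [f.as_sum]
  simp only [map_sum, bind₁_X_pow_monomial, coeff_sum, coeff_monomial,
    (weightMul_injective w hw).eq_iff, Finset.sum_ite_eq', mem_support_iff]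
  exact ite_eq_left_iff.mpr fun h => (not_not.mp h).symm

lemma wdeg_monomial (d : Fin m →₀ ℕ) {a : F} (ha : a ≠ 0) :
    wdeg w (monomial d a) = ∑ i, w i * d i := by
  rw [wdeg, bind₁_X_pow_monomial, totalDegree_monomial _ ha, sum_weightMul]

lemma le_wdeg (hw : ∀ i, 0 < w i) {f : MvPolynomial (Fin m) F} {d : Fin m →₀ ℕ}
    (hd : d ∈ f.support) : ∑ i, w i * d i ≤ wdeg w f := by
  rw [← sum_weightMul]
  refine le_totalDegree ?_
  rw [mem_support_iff, coeff_weightMul_bind₁ w hw]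
  exact mem_support_iff.mp hd

end WeightedDegree

lemma WRMC_eq_span_monomialEval {F : Type*} [Field F] [Fintype F] {m : ℕ} (w : Fin m → ℕ)
    (hw : ∀ i, 0 < w i) (ω : ℕ) :
    WRMC F m w ω = span F ((fun e : Fin m → Fin (Fintype.card F) => monomialEval (e ·)) ''
      {e | ∑ i, w i * (e i : ℕ) ≤ ω}) := by
  apply le_antisymm
  · rw [WRMC, span_le]
    rintro _ ⟨f, hf, rfl⟩
    exact evalFun_mem_span_monomialEval f _ fun d hd e hle =>
      (Finset.sum_le_sum fun i _ => Nat.mul_le_mul_left _ (hle i)).trans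
        ((le_wdeg w hw hd).trans hf)
  · rw [span_le]
    rintro _ ⟨e, he, rfl⟩
    refine subset_span ⟨monomial (Finsupp.equivFunOnFinite.symm (e ·)) 1, ?_, ?_⟩
    · rwa [wdeg_monomial w _ one_ne_zero]
    · funext x
      simp [monomialEval, eval_monomial, Finsupp.prod_fintype]

theorem wrmc_dimension_general (q m : ℕ) (F : Type*) [Field F] [Fintype F]
    (hq : Fintype.card F = q)
    (w : Fin m → ℕ) (hw : ∀ i, 0 < w i)
    (ω : ℕ) :
    Module.finrank F (WRMC F m w ω) =
      (Finset.univ.filter fun e : Fin m → Fin q => ∑ i, w i * (e i : ℕ) ≤ ω).card := by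
  subst hq
  rw [WRMC_eq_span_monomialEval w hw, Set.image_eq_range]
  exact (finrank_span_eq_card (linearIndependent_monomialEval.comp _ Subtype.val_injective)).trans
    (Fintype.card_subtype _)

/-- the dimension of the weighted Reed–Muller code `WRMC_ω(m,q)` equals the
number of exponent tuples `(e_0,…,e_{m-1})` with `0 ≤ e_i ≤ q-1` and `Σ w_i e_i ≤ ω`. -/
theorem wrmc_dimension (q m : ℕ) (F : Type*) [Field F] [Fintype F]
    (hq : Fintype.card F = q) (hm : 1 ≤ m)
    (w : Fin m → ℕ) (hw : ∀ i, 0 < w i)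
    (ω : ℕ) (hω : ω ≤ (q - 1) * ∑ i, w i) :
    Module.finrank F (WRMC F m w ω) =
      (Finset.univ.filter fun e : Fin m → Fin q => ∑ i, w i * (e i : ℕ) ≤ ω).card :=
  wrmc_dimension_general q m F hq w hw ω
end

section
/- Let p be a prime and m ≥ 1. For every tuple i = (i_0, …, i_{m−1}) ∈ {0, …, p−1}^m, the following identity holds in A: (x_0 − 1)^{i_0} ⋯ (x_{m−1} − 1)^{i_{m−1}} = Σ_{j} H_i(j_0, …, j_{m−1}) · x_0^{j_0} ⋯ x_{m−1}^{j_{m−1}}, where the sum runs over all tuples j = (j_0, …, j_{m−1}) ∈ {0, …, p−1}^m with j_l ≤ i_l for every l. -/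
open MvPolynomial

/-- The univariate polynomial `H_i(Y) = α_i ∏_{j=1}^{p-1-i} (Y + j)` with `α_i = -(i!)`,
evaluated at `y ∈ F_p`. -/
def Hone (p : ℕ) (i : ℕ) (y : ZMod p) : ZMod p :=
  (-(Nat.factorial i : ZMod p)) * ∏ j ∈ Finset.Icc 1 (p - 1 - i), (y + (j : ZMod p))

/-- `H_i(j) = ∏_l H_{i_l}(j_l)` for tuples `i, j ∈ {0,…,p-1}^m`. -/
def Hmulti (p m : ℕ) (i j : Fin m → Fin p) : ZMod p :=
  ∏ l, Hone p (i l : ℕ) (((j l : ℕ) : ZMod p))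

/-!
Expanding each factor binomially, `(x_l - 1)^{i_l} = Σ_{j ≤ i_l} (-1)^{i_l - j} C(i_l, j) x_l^j`;
all exponents stay below `p`, so the relations `x_l^p = 1` never enter. It remains to see that
`H_i(j) = (-1)^{i-j} C(i, j)` in `F_p` for `j ≤ i`: the product in `H_i(j)` is `(p-1-(i-j))! / j!`,
and Wilson's theorem gives `(p-1-r)! r! = (-1)^{r+1}`.
-/

open Nat Finset

theorem ZMod.factorial_sub_one_sub_mul_factorial {p : ℕ} [Fact p.Prime] {r : ℕ} (hr : r ≤ p - 1) :
    ((p - 1 - r)! : ZMod p) * r ! = (-1) ^ (r + 1) := by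
  have hwilson := ZMod.wilsons_lemma (p := p)
  rw [← factorial_mul_descFactorial hr, Nat.cast_mul, ZMod.cast_descFactorial (by omega)] at hwilson
  have hsq : ((-1 : ZMod p) ^ r) ^ 2 = 1 := by rw [← pow_mul, pow_mul', neg_one_sq, one_pow]
  linear_combination (-1 : ZMod p) ^ r * hwilson - ((p - 1 - r)! * r ! : ZMod p) * hsq

theorem Nat.factorial_mul_prod_Icc_add (j n : ℕ) : j ! * ∏ k ∈ Icc 1 n, (j + k) = (j + n)! := by
  induction n with
  | zero => simp
  | succ n ih =>
    rw [prod_Icc_succ_top (by omega), ← mul_assoc, ih, ← add_assoc, factorial_succ, mul_comm]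

theorem Hone_natCast {p : ℕ} [Fact p.Prime] {i j : ℕ} (hji : j ≤ i) (hi : i < p) :
    Hone p i j = (-1) ^ (i - j) * (i.choose j : ZMod p) := by
  have hfact_ne_zero {a : ℕ} (ha : a < p) : (a ! : ZMod p) ≠ 0 := by
    rw [Ne, ZMod.natCast_eq_zero_iff, (Fact.out : p.Prime).dvd_factorial]
    omega
  apply mul_right_cancel₀ (hfact_ne_zero (show j < p by omega))
  apply mul_right_cancel₀ (hfact_ne_zero (show i - j < p by omega))
  have hprod : (j ! : ZMod p) * ∏ k ∈ Icc 1 (p - 1 - i), ((j : ZMod p) + k) = (p - 1 - (i - j))! := by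
    rw [show p - 1 - (i - j) = j + (p - 1 - i) by omega, ← factorial_mul_prod_Icc_add]
    push_cast
    rfl
  have hchoose : (i.choose j : ZMod p) * j ! * (i - j)! = i ! := by
    rw [← Nat.cast_mul, ← Nat.cast_mul, choose_mul_factorial_mul_factorial hji]
  calc Hone p i j * j ! * (i - j)!
      = -(i ! : ZMod p) * (((p - 1 - (i - j))! : ZMod p) * (i - j)!) := by
        rw [Hone, ← hprod]; ring
    _ = (-1) ^ (i - j) * (i.choose j : ZMod p) * j ! * (i - j)! := by
        linear_combination -(i ! : ZMod p) * ZMod.factorial_sub_one_sub_mul_factorial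
          (show i - j ≤ p - 1 by omega) - (-1 : ZMod p) ^ (i - j) * hchoose

theorem sub_one_pow_eq_sum_fin {R A : Type*} [CommRing R] [CommRing A] [Algebra R A]
    {n N : ℕ} (hn : n < N) (x : A) :
    (x - 1) ^ n = ∑ k : Fin N, ((-1 : R) ^ (n - k) * n.choose k) • x ^ (k : ℕ) := by
  calc (x - 1) ^ n = ∑ k ∈ range (n + 1), ((-1 : R) ^ (n - k) * n.choose k) • x ^ k := by
        rw [sub_eq_add_neg, add_pow]
        refine sum_congr rfl fun k _ => ?_
        rw [Algebra.smul_def, map_mul, map_pow, map_neg, map_one, map_natCast]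
        ring
    _ = ∑ k ∈ range N, ((-1 : R) ^ (n - k) * n.choose k) • x ^ k := by
        refine sum_subset (range_subset_range.2 (by omega)) fun k _ hk => ?_
        rw [choose_eq_zero_of_lt (by simpa using hk), Nat.cast_zero, mul_zero, zero_smul]
    _ = _ := (Fin.sum_univ_eq_sum_range (fun k => ((-1 : R) ^ (n - k) * n.choose k) • x ^ k) N).symm

theorem prod_neg_one_pow_mul_choose_eq_ite_Hmulti {p m : ℕ} [Fact p.Prime] (i j : Fin m → Fin p) :
    ∏ l, ((-1 : ZMod p) ^ ((i l : ℕ) - j l) * (i l : ℕ).choose (j l)) =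
      if ∀ l, (j l : ℕ) ≤ i l then Hmulti p m i j else 0 := by
  calc _ = ∏ l, if (j l : ℕ) ≤ i l then Hone p (i l) (j l : ℕ) else 0 := by
        refine Fintype.prod_congr _ _ fun l => ?_
        split_ifs with hji
        · exact (Hone_natCast hji (i l).isLt).symm
        · rw [choose_eq_zero_of_lt (by omega), Nat.cast_zero, mul_zero]
    _ = if ∀ l, (j l : ℕ) ≤ i l then Hmulti p m i j else 0 := by
        rw [Hmulti]
        convert Fintype.prod_ite_zero

theorem jennings_expansion_general (p m : ℕ) (hp : p.Prime) (i : Fin m → Fin p) :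
    ∏ l, (xA p m l - 1) ^ ((i l : ℕ)) =
      ∑ j ∈ Finset.univ.filter (fun j : Fin m → Fin p => ∀ l, (j l : ℕ) ≤ (i l : ℕ)),
        Hmulti p m i j • ∏ l, (xA p m l) ^ ((j l : ℕ)) := by
  have := Fact.mk hp
  calc ∏ l, (xA p m l - 1) ^ (i l : ℕ)
      = ∏ l, ∑ k : Fin p,
          ((-1 : ZMod p) ^ ((i l : ℕ) - k) * (i l : ℕ).choose k) • xA p m l ^ (k : ℕ) :=
        Fintype.prod_congr _ _ fun l => sub_one_pow_eq_sum_fin (i l).isLt _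
    _ = ∑ j : Fin m → Fin p, ∏ l,
          ((-1 : ZMod p) ^ ((i l : ℕ) - j l) * (i l : ℕ).choose (j l)) • xA p m l ^ (j l : ℕ) :=
        Fintype.prod_sum _
    _ = ∑ j : Fin m → Fin p, (if ∀ l, (j l : ℕ) ≤ i l then Hmulti p m i j else 0) •
          ∏ l, xA p m l ^ (j l : ℕ) := by
        simp_rw [prod_smul, prod_neg_one_pow_mul_choose_eq_ite_Hmulti]
    _ = _ := by simp_rw [ite_smul, zero_smul, ← sum_filter]

/-- in `A`, for every tuple `i ∈ {0,…,p-1}^m`,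
`(x_0-1)^{i_0} ⋯ (x_{m-1}-1)^{i_{m-1}} = Σ_{j ≤ i} H_i(j) x_0^{j_0} ⋯ x_{m-1}^{j_{m-1}}`. -/
theorem jennings_expansion (p m : ℕ) (hp : p.Prime) [NeZero p] (hm : 1 ≤ m)
    (i : Fin m → Fin p) :
    ∏ l, (xA p m l - 1) ^ ((i l : ℕ)) =
      ∑ j ∈ Finset.univ.filter (fun j : Fin m → Fin p => ∀ l, (j l : ℕ) ≤ (i l : ℕ)),
        Hmulti p m i j • ∏ l, (xA p m l) ^ ((j l : ℕ)) :=
  jennings_expansion_general p m hp i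
end

section
/- Let p be a prime, m ≥ 1, and ω a natural number with ω ≤ m(p−1). Let P denote the Jacobson radical of A. Then ψ(C_ω(m,p)) = P^{m(p−1)−ω}, i.e. the image in A of the Generalized Reed–Muller code of order ω equals the (m(p−1)−ω)-th power of the radical, and the set { (x_0 − 1)^{i_0} ⋯ (x_{m−1} − 1)^{i_{m−1}} : 0 ≤ i_k ≤ p−1 for all k, Σ_{k=0}^{m−1} i_k ≥ m(p−1) − ω } is an F_p-linear basis of P^{m(p−1)−ω}. -/
open MvPolynomial

/-!
The Jennings monomials `∏ (x_l - 1)^{i_l}`, `0 ≤ i_l < p`, are linearly independent (the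
substitution `x_l ↦ X_l + 1` sends them to the monomials of `F_p[X]/(X_l^p)`), and the span of
those with `Σ i_l ≥ K` is an ideal, equal to the `K`-th power of the augmentation ideal
`(x_l - 1)`. The augmentation ideal is maximal and generated by nilpotents, so it is the
Jacobson radical.

Under `ψ` the evaluation vector of `Y^a` becomes `∏_l Σ_t t^{a_l} x_l^t`. Expanding
`x_l^t = Σ_k C(t,k) (x_l - 1)^k` produces the coefficients `Σ_t t^a C(t,k)`, which are power
sums over `F_p`: they vanish for `a + k < p - 1` and not for `a + k = p - 1`. So `ψ(Y^a)` is a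
nonzero multiple of the Jennings monomial with exponents `p - 1 - a_l` plus Jennings monomials
of larger exponents, and this triangular change of basis carries the reduced monomials of degree
`≤ ω` onto the Jennings monomials of degree `≥ m(p-1) - ω`.
-/

open Finset

lemma span_image_eq_of_triangular {ι K M : Type*} [Fintype ι] [PartialOrder ι] [Field K]
    [AddCommGroup M] [Module K M] (e v : ι → M) (c : ι → ι → K)
    (hv : ∀ i, v i = ∑ j, c i j • e j) (htri : ∀ i j, c i j ≠ 0 → i ≤ j)
    (hdiag : ∀ i, c i i ≠ 0) {S : Set ι} (hS : IsUpperSet S) :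
    Submodule.span K (v '' S) = Submodule.span K (e '' S) := by
  classical
  apply le_antisymm
  · rw [Submodule.span_le]
    rintro _ ⟨i, hi, rfl⟩
    rw [SetLike.mem_coe, hv]
    refine Submodule.sum_mem _ fun j _ => ?_
    by_cases hc : c i j = 0
    · simp [hc]
    · exact Submodule.smul_mem _ _ (Submodule.subset_span ⟨j, hS (htri i j hc) hi, rfl⟩)
  · rw [Submodule.span_le]
    rintro _ ⟨i, hi, rfl⟩
    induction i using WellFoundedGT.induction with
    | _ i ih =>
    -- the diagonal entry is invertible and every other `e j` occurring in `v i` has `i < j`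
    have he : e i = (c i i)⁻¹ • (v i - ∑ j ∈ univ.erase i, c i j • e j) := by
      rw [hv, ← add_sum_erase _ _ (mem_univ i), add_sub_cancel_right, smul_smul,
        inv_mul_cancel₀ (hdiag i), one_smul]
    rw [SetLike.mem_coe, he]
    refine Submodule.smul_mem _ _ (Submodule.sub_mem _ (Submodule.subset_span ⟨i, hi, rfl⟩)
      (Submodule.sum_mem _ fun j hj => ?_))
    by_cases hc : c i j = 0
    · simp [hc]
    · have hij : i < j := (htri i j hc).lt_of_ne (ne_of_mem_erase hj).symm
      exact Submodule.smul_mem _ _ (ih j hij (hS hij.le hi))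

section FiniteField

variable {K : Type*} [Field K] [Fintype K]

lemma exists_pow_eq_pow_of_lt_card (e : ℕ) :
    ∃ r < Fintype.card K, r ≤ e ∧ ∀ t : K, t ^ e = t ^ r := by
  induction e using Nat.strong_induction_on with
  | _ e ih =>
  have hq : 1 < Fintype.card K := Fintype.one_lt_card
  by_cases he : e < Fintype.card K
  · exact ⟨e, he, le_rfl, fun _ => rfl⟩
  · obtain ⟨r, hr, hre, ht⟩ := ih (e - (Fintype.card K - 1)) (by omega)
    refine ⟨r, hr, by omega, fun t => ?_⟩
    rw [← ht]
    calc t ^ e = t ^ (e - Fintype.card K) * t ^ Fintype.card K := by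
          rw [← pow_add]; congr 1; omega
      _ = t ^ (e - (Fintype.card K - 1)) := by
        rw [FiniteField.pow_card, ← pow_succ]; congr 1; omega

lemma sum_pow_card_sub_one : ∑ t : K, t ^ (Fintype.card K - 1) = -1 := by
  classical
  have hq : 1 < Fintype.card K := Fintype.one_lt_card
  have h : ∀ t : K, t ^ (Fintype.card K - 1) = if t = 0 then 0 else 1 := fun t => by
    split_ifs with ht
    · rw [ht, zero_pow (by omega)]
    · exact FiniteField.pow_card_sub_one_eq_one t ht
  simp [h, Finset.sum_ite, Finset.filter_ne', Nat.cast_sub hq.le]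

lemma sum_pow_mul_prod_sub_natCast (a k : ℕ) (h : a + k ≤ Fintype.card K - 1) :
    ∑ t : K, t ^ a * ∏ r ∈ range k, (t - r)
      = if a + k = Fintype.card K - 1 then -1 else 0 := by
  induction k generalizing a with
  | zero =>
    split_ifs with ha
    · rw [add_zero] at ha
      simp [ha, sum_pow_card_sub_one]
    · simpa using FiniteField.sum_pow_lt_card_sub_one K a (by omega)
  | succ k ih =>
    have hrec : ∀ t : K, t ^ a * ∏ r ∈ range (k + 1), (t - r)
        = t ^ (a + 1) * ∏ r ∈ range k, (t - r) - k * (t ^ a * ∏ r ∈ range k, (t - r)) := by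
      intro t; rw [prod_range_succ]; ring
    rw [sum_congr rfl fun t _ => hrec t, sum_sub_distrib, ← mul_sum, ih a (by omega),
      if_neg (show a + k ≠ Fintype.card K - 1 by omega), mul_zero, sub_zero,
      ih (a + 1) (by omega), add_right_comm, add_assoc]

end FiniteField

section ModularAlgebra

variable (p m : ℕ) [Fact p.Prime]

lemma xA_pow_prime (l : Fin m) : xA p m l ^ p = 1 := by
  have h : Ideal.Quotient.mk (Aideal p m) (X l ^ p - 1) = 0 :=
    Ideal.Quotient.eq_zero_iff_mem.mpr (Ideal.subset_span ⟨l, rfl⟩)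
  rwa [map_sub, map_pow, map_one, sub_eq_zero] at h

lemma xA_sub_one_pow_prime (l : Fin m) : (xA p m l - 1) ^ p = 0 := by
  have h := map_sub (FiniteField.frobeniusAlgHom (ZMod p) (ModA p m)) (xA p m l) 1
  simpa [ZMod.card, xA_pow_prime] using h

noncomputable def augmentation : ModA p m →ₐ[ZMod p] ZMod p :=
  Ideal.Quotient.liftₐ (Aideal p m) (aeval fun _ => 1) fun _ hf =>
    (Ideal.span_le (I := RingHom.ker (aeval (R := ZMod p) fun (_ : Fin m) => (1 : ZMod p)))).mpr
      (by rintro _ ⟨l, rfl⟩; simp) hf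

@[simp]
lemma augmentation_mk (f : MvPolynomial (Fin m) (ZMod p)) :
    augmentation p m (Ideal.Quotient.mk _ f) = eval (fun _ => 1) f :=
  rfl

@[simp]
lemma augmentation_xA (l : Fin m) : augmentation p m (xA p m l) = 1 := by
  simp [xA]

noncomputable def augmentationIdeal : Ideal (ModA p m) :=
  Ideal.span (Set.range fun l => xA p m l - 1)

variable {p m} in
lemma xA_sub_one_mem_augmentationIdeal (l : Fin m) : xA p m l - 1 ∈ augmentationIdeal p m :=
  Ideal.subset_span ⟨l, rfl⟩

lemma sub_augmentation_mem_augmentationIdeal (a : ModA p m) :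
    a - algebraMap (ZMod p) (ModA p m) (augmentation p m a) ∈ augmentationIdeal p m := by
  obtain ⟨f, rfl⟩ := Ideal.Quotient.mk_surjective a
  induction f using MvPolynomial.induction_on with
  | C c =>
    rw [← MvPolynomial.algebraMap_eq, Ideal.Quotient.mk_algebraMap, AlgHom.commutes,
      Algebra.algebraMap_self, RingHom.id_apply, sub_self]
    exact zero_mem _
  | add f g hf hg =>
    rw [map_add, map_add, map_add, add_sub_add_comm]
    exact add_mem hf hg
  | mul_X f l hf =>
    rw [map_mul, map_mul, ← xA, augmentation_xA, mul_one]
    convert add_mem (Ideal.mul_mem_left _ (Ideal.Quotient.mk _ f)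
      (xA_sub_one_mem_augmentationIdeal l)) hf using 1
    ring

lemma augmentationIdeal_eq_ker : augmentationIdeal p m = RingHom.ker (augmentation p m) := by
  refine le_antisymm ((Ideal.span_le).mpr ?_) fun a ha => ?_
  · rintro _ ⟨l, rfl⟩
    simp
  · simpa [RingHom.mem_ker.mp ha] using sub_augmentation_mem_augmentationIdeal p m a

lemma augmentationIdeal_isMaximal : (augmentationIdeal p m).IsMaximal := by
  rw [augmentationIdeal_eq_ker]
  exact RingHom.ker_isMaximal_of_surjective _ fun c => ⟨algebraMap _ _ c, AlgHom.commutes _ c⟩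

lemma jacobson_bot_eq_augmentationIdeal :
    Ideal.jacobson (⊥ : Ideal (ModA p m)) = augmentationIdeal p m := by
  refine le_antisymm (sInf_le ⟨bot_le, augmentationIdeal_isMaximal p m⟩) ?_
  rw [Ideal.jacobson_bot, augmentationIdeal, Ideal.span_le]
  rintro _ ⟨l, rfl⟩
  exact nilradical_le_jacobson _ ⟨p, xA_sub_one_pow_prime p m l⟩

noncomputable def jennings (d : Fin m → ℕ) : ModA p m :=
  ∏ l, (xA p m l - 1) ^ d l

noncomputable def jenningsSpan (K : ℕ) : Submodule (ZMod p) (ModA p m) :=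
  Submodule.span (ZMod p)
    ((fun i : Fin m → Fin p => jennings p m fun l => i l) '' {i | K ≤ ∑ l, (i l : ℕ)})

variable {p m}

lemma jennings_add (d e : Fin m → ℕ) :
    jennings p m (d + e) = jennings p m d * jennings p m e := by
  simp only [jennings, Pi.add_apply, pow_add, prod_mul_distrib]

lemma jennings_single (l : Fin m) : jennings p m (Pi.single l 1) = xA p m l - 1 := by
  classical
  simp [jennings, Pi.single_apply, pow_ite]

lemma jennings_mem_jenningsSpan {K : ℕ} {d : Fin m → ℕ} (hd : K ≤ ∑ l, d l) :
    jennings p m d ∈ jenningsSpan p m K := by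
  by_cases hlt : ∀ l, d l < p
  · exact Submodule.subset_span ⟨fun l => ⟨d l, hlt l⟩, hd, rfl⟩
  · push Not at hlt
    obtain ⟨l, hl⟩ := hlt
    have h0 : jennings p m d = 0 := prod_eq_zero (mem_univ l) <| by
      rw [← Nat.sub_add_cancel hl, pow_add, xA_sub_one_pow_prime, mul_zero]
    exact h0 ▸ zero_mem _

lemma jenningsSpan_antitone : Antitone (jenningsSpan p m) :=
  fun _ _ hK => Submodule.span_mono (Set.image_mono fun _ hi => le_trans hK hi)

lemma sub_one_mul_mem_jenningsSpan {K : ℕ} (l : Fin m) {w : ModA p m}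
    (hw : w ∈ jenningsSpan p m K) : (xA p m l - 1) * w ∈ jenningsSpan p m (K + 1) := by
  classical
  induction hw using Submodule.span_induction with
  | mem _ hi =>
    obtain ⟨i, hi, rfl⟩ := hi
    rw [← jennings_single, ← jennings_add]
    refine jennings_mem_jenningsSpan ?_
    simp only [Pi.add_apply, sum_add_distrib, sum_pi_single', mem_univ, if_true]
    have : K ≤ ∑ l, (i l : ℕ) := hi
    omega
  | zero => simp
  | add _ _ _ _ hx hy => rw [mul_add]; exact add_mem hx hy
  | smul c _ _ hx => rw [mul_smul_comm]; exact Submodule.smul_mem _ c hx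

lemma mul_mem_jenningsSpan {K : ℕ} (a : ModA p m) {w : ModA p m}
    (hw : w ∈ jenningsSpan p m K) : a * w ∈ jenningsSpan p m K := by
  obtain ⟨f, rfl⟩ := Ideal.Quotient.mk_surjective a
  induction f using MvPolynomial.induction_on generalizing w with
  | C c =>
    rw [← MvPolynomial.algebraMap_eq, Ideal.Quotient.mk_algebraMap, ← Algebra.smul_def]
    exact Submodule.smul_mem _ c hw
  | add f g hf hg => rw [map_add, add_mul]; exact add_mem (hf hw) (hg hw)
  | mul_X f l hf =>
    rw [map_mul, mul_assoc]
    refine hf ?_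
    have h : Ideal.Quotient.mk _ (X l) * w = (xA p m l - 1) * w + w := by rw [xA]; ring
    exact h ▸ add_mem (jenningsSpan_antitone K.le_succ (sub_one_mul_mem_jenningsSpan l hw)) hw

lemma jenningsSpan_zero : jenningsSpan p m 0 = ⊤ := by
  have h1 : (1 : ModA p m) ∈ jenningsSpan p m 0 := by
    simpa [jennings] using jennings_mem_jenningsSpan (p := p) (K := 0) (d := fun _ => 0) (by simp)
  exact eq_top_iff.mpr fun a _ => mul_one a ▸ mul_mem_jenningsSpan a h1

lemma jennings_mem_augmentationIdeal_pow (d : Fin m → ℕ) :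
    jennings p m d ∈ augmentationIdeal p m ^ ∑ l, d l := by
  refine prod_pow_eq_pow_sum univ d (augmentationIdeal p m) ▸ ?_
  exact Ideal.prod_mem_prod fun l _ => Ideal.pow_mem_pow (xA_sub_one_mem_augmentationIdeal l) _

lemma mem_jenningsSpan_of_mem_augmentationIdeal_pow {K : ℕ} {a : ModA p m}
    (ha : a ∈ augmentationIdeal p m ^ K) : a ∈ jenningsSpan p m K := by
  induction K generalizing a with
  | zero => simp [jenningsSpan_zero]
  | succ K ih =>
    rw [Submodule.pow_succ] at ha
    refine Submodule.mul_induction_on ha (fun w hw n hn => ?_) fun _ _ => add_mem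
    induction hn using Submodule.span_induction with
    | mem _ hn =>
      obtain ⟨l, rfl⟩ := hn
      exact mul_comm (xA p m l - 1) w ▸ sub_one_mul_mem_jenningsSpan l (ih hw)
    | zero => simp
    | add _ _ _ _ hx hy => rw [mul_add]; exact add_mem hx hy
    | smul c _ _ hx => rw [smul_eq_mul, mul_left_comm]; exact mul_mem_jenningsSpan c hx

lemma restrictScalars_augmentationIdeal_pow (K : ℕ) :
    (augmentationIdeal p m ^ K).restrictScalars (ZMod p) = jenningsSpan p m K := by
  refine le_antisymm (fun _ => mem_jenningsSpan_of_mem_augmentationIdeal_pow) ?_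
  rw [jenningsSpan, Submodule.span_le]
  rintro _ ⟨i, hi, rfl⟩
  exact Ideal.pow_le_pow_right hi (jennings_mem_augmentationIdeal_pow _)

end ModularAlgebra

section Independence

variable {σ R : Type*}

lemma MvPolynomial.eq_zero_of_mem_span_X_pow [CommSemiring R] {n : ℕ}
    {f : MvPolynomial σ R} (hdeg : ∀ s ∈ f.support, ∀ i, s i < n)
    (hf : f ∈ Ideal.span (Set.range fun i => (X i : MvPolynomial σ R) ^ n)) : f = 0 := by
  classical
  have hrange : (Set.range fun i => (X i : MvPolynomial σ R) ^ n)
      = (fun s => monomial s (1 : R)) '' Set.range fun i => Finsupp.single i n := by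
    rw [← Set.range_comp]
    congr 1
    funext i
    exact X_pow_eq_monomial
  rw [hrange, mem_ideal_span_monomial_image] at hf
  refine support_eq_empty.mp (eq_empty_of_forall_notMem fun s hs => ?_)
  obtain ⟨_, ⟨i, rfl⟩, hle⟩ := hf s hs
  have hi := hle i
  rw [Finsupp.single_eq_same] at hi
  exact (hdeg s hs i).not_ge hi

lemma MvPolynomial.linearIndependent_mk_monomial_of_lt [Fintype σ] [CommRing R] (n : ℕ) :
    LinearIndependent R fun i : σ → Fin n =>
      Ideal.Quotient.mk (Ideal.span (Set.range fun l => (X l : MvPolynomial σ R) ^ n))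
        (monomial (Finsupp.equivFunOnFinite.symm fun l => (i l : ℕ)) 1) := by
  let e : (σ → Fin n) → (σ →₀ ℕ) := fun i => Finsupp.equivFunOnFinite.symm fun l => i l
  have he : Function.Injective e := fun i j hij =>
    _root_.funext fun l => Fin.ext (congrFun (Finsupp.equivFunOnFinite.symm.injective hij) l)
  have hspan : Submodule.span R (Set.range fun i => (monomial (e i) 1 : MvPolynomial σ R))
      = restrictSupport R (Set.range e) := by
    rw [restrictSupport_eq_span, ← Set.range_comp]
    rfl
  refine ((basisMonomials σ R).linearIndependent.comp e he).map
    (f := (Ideal.Quotient.mkₐ R _).toLinearMap) ?_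
  refine Submodule.disjoint_def.mpr fun f hf hker => eq_zero_of_mem_span_X_pow
    (fun s hs l => ?_) (Ideal.Quotient.eq_zero_iff_mem.mp hker)
  rw [coe_basisMonomials, Function.comp_def, hspan, mem_restrictSupport_iff] at hf
  obtain ⟨i, rfl⟩ := hf hs
  exact (i l).2

end Independence

section Jennings

variable (p m : ℕ) [Fact p.Prime]

noncomputable def shiftTruncate :
    ModA p m →ₐ[ZMod p] MvPolynomial (Fin m) (ZMod p) ⧸
      Ideal.span (Set.range fun l => (X l : MvPolynomial (Fin m) (ZMod p)) ^ p) :=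
  Ideal.quotientMapₐ _ (aeval fun l => X l + 1) <| Ideal.span_le.mpr <| by
    rintro _ ⟨l, rfl⟩
    rw [SetLike.mem_coe, Ideal.mem_comap, map_sub, map_pow, aeval_X, map_one, add_pow_char, one_pow,
      add_sub_cancel_right]
    exact Ideal.subset_span ⟨l, rfl⟩

lemma shiftTruncate_jennings (d : Fin m → ℕ) :
    shiftTruncate p m (jennings p m d)
      = Ideal.Quotient.mk _ (monomial (Finsupp.equivFunOnFinite.symm d) 1) := by
  simp [shiftTruncate, jennings, xA, monomial_eq, Finsupp.prod_fintype]

lemma jennings_linearIndependent :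
    LinearIndependent (ZMod p) fun i : Fin m → Fin p => jennings p m fun l => i l :=
  LinearIndependent.of_comp (shiftTruncate p m).toLinearMap <| by
    simpa [Function.comp_def, shiftTruncate_jennings] using
      linearIndependent_mk_monomial_of_lt (σ := Fin m) (R := ZMod p) p

end Jennings

section ReedMuller

variable {K : Type*} [Field K] [Fintype K] {m : ℕ}

def monomialFun (a : Fin m → ℕ) (P : Fin m → K) : K :=
  ∏ l, P l ^ a l

lemma GRM_eq_span_monomialFun (ω : ℕ) :
    GRM K m ω = Submodule.span K (monomialFun ''
      {a : Fin m → ℕ | (∀ l, a l < Fintype.card K) ∧ ∑ l, a l ≤ ω}) := by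
  classical
  refine le_antisymm ((Submodule.span_le).mpr ?_) ((Submodule.span_le).mpr ?_)
  · rintro _ ⟨f, hf, rfl⟩
    have hsum :
        (fun P => eval P f) = ∑ d ∈ f.support, coeff d f • monomialFun fun l => d l := by
      funext P
      conv_lhs => rw [f.as_sum, map_sum]
      simp only [Finset.sum_apply, Pi.smul_apply, smul_eq_mul, eval_monomial, monomialFun,
        Finsupp.prod_fintype _ _ fun _ => pow_zero _]
    rw [SetLike.mem_coe, hsum]
    refine Submodule.sum_mem _ fun d hd => Submodule.smul_mem _ _ ?_
    choose r hr hrd hpow using fun l => exists_pow_eq_pow_of_lt_card (K := K) (d l)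
    have hr_eq : (monomialFun fun l => d l) = monomialFun (K := K) r :=
      funext fun P => prod_congr rfl fun l _ => hpow l (P l)
    refine hr_eq ▸ Submodule.subset_span ⟨r, ⟨hr, ?_⟩, rfl⟩
    calc ∑ l, r l ≤ ∑ l, d l := sum_le_sum fun l _ => hrd l
      _ = d.sum fun _ e => e := (Finsupp.sum_fintype d (fun _ e => e) fun _ => rfl).symm
      _ ≤ f.totalDegree := le_totalDegree hd
      _ ≤ ω := hf
  · rintro _ ⟨a, ⟨-, ha⟩, rfl⟩
    refine Submodule.subset_span ⟨∏ l, X l ^ a l, ?_, funext fun P => by simp [monomialFun]⟩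
    calc (∏ l, (X l : MvPolynomial (Fin m) K) ^ a l).totalDegree
        ≤ ∑ l, (X l ^ a l : MvPolynomial (Fin m) K).totalDegree := totalDegree_finsetProd _ _
      _ = ∑ l, a l := by simp [totalDegree_X_pow]
      _ ≤ ω := ha

end ReedMuller

lemma pow_eq_sum_choose_smul_sub_one_pow {R : Type*} [CommRing R] (x : R) {n j : ℕ} (hj : j < n) :
    x ^ j = ∑ k : Fin n, j.choose k • (x - 1) ^ (k : ℕ) := by
  rw [Fin.sum_univ_eq_sum_range (fun k => j.choose k • (x - 1) ^ k)]
  calc x ^ j = (x - 1 + 1) ^ j := by rw [sub_add_cancel]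
    _ = ∑ k ∈ range (j + 1), j.choose k • (x - 1) ^ k := by
      rw [add_pow]
      simp [nsmul_eq_mul, mul_comm]
    _ = ∑ k ∈ range n, j.choose k • (x - 1) ^ k := by
      refine sum_subset (range_subset_range.mpr hj) fun k _ hk => ?_
      rw [Nat.choose_eq_zero_of_lt (by simpa using hk), zero_smul]

section Psi

variable (p m : ℕ) [Fact p.Prime]

noncomputable def binomialPowerSum (a k : ℕ) : ZMod p :=
  ∑ t : ZMod p, t ^ a * (t.val.choose k : ZMod p)

lemma psi_monomialFun (a : Fin m → ℕ) :
    psi p m (monomialFun a) = ∑ κ : Fin m → Fin p,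
      (∏ l, binomialPowerSum p (a l) (κ l)) • jennings p m fun l => κ l := by
  classical
  have hfactor : ∀ l, ∑ t : ZMod p, t ^ a l • xA p m l ^ t.val
      = ∑ k : Fin p, binomialPowerSum p (a l) k • (xA p m l - 1) ^ (k : ℕ) := fun l => by
    simp_rw [pow_eq_sum_choose_smul_sub_one_pow (xA p m l) (ZMod.val_lt _), smul_sum,
      binomialPowerSum, sum_smul, ← Nat.cast_smul_eq_nsmul (ZMod p), smul_smul]
    exact sum_comm
  calc psi p m (monomialFun a)
      = ∑ j : Fin m → ZMod p, ∏ l, (j l ^ a l • xA p m l ^ (j l).val) := by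
        simp [psi, monomialFun, prod_smul]
    _ = ∏ l, ∑ t : ZMod p, t ^ a l • xA p m l ^ t.val := by
        rw [prod_univ_sum, Fintype.piFinset_univ]
    _ = ∏ l, ∑ k : Fin p, binomialPowerSum p (a l) k • (xA p m l - 1) ^ (k : ℕ) :=
        prod_congr rfl fun l _ => hfactor l
    _ = _ := by
        rw [prod_univ_sum, Fintype.piFinset_univ]
        simp [prod_smul, jennings]

variable {p}

lemma factorial_mul_binomialPowerSum (a : ℕ) {k : ℕ} :
    (k.factorial : ZMod p) * binomialPowerSum p a k
      = ∑ t : ZMod p, t ^ a * ∏ r ∈ range k, (t - r) := by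
  rw [binomialPowerSum, mul_sum]
  refine sum_congr rfl fun t _ => ?_
  rw [mul_left_comm, ← Nat.cast_mul, ← Nat.descFactorial_eq_factorial_mul_choose,
    ← descPochhammer_eval_eq_descFactorial, descPochhammer_eval_eq_prod_range,
    ZMod.natCast_zmod_val]

lemma factorial_ne_zero_of_lt {k : ℕ} (hk : k < p) : (k.factorial : ZMod p) ≠ 0 := by
  rw [Ne, ZMod.natCast_eq_zero_iff, (Fact.out : p.Prime).dvd_factorial]
  omega

lemma binomialPowerSum_eq_zero {a k : ℕ} (h : a + k < p - 1) : binomialPowerSum p a k = 0 := by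
  have hk : k < p := by omega
  have hsum := factorial_mul_binomialPowerSum (p := p) a (k := k)
  rw [sum_pow_mul_prod_sub_natCast a k (by rw [ZMod.card]; omega),
    if_neg (by rw [ZMod.card]; omega)] at hsum
  exact (mul_eq_zero.mp hsum).resolve_left (factorial_ne_zero_of_lt hk)

lemma binomialPowerSum_ne_zero {a k : ℕ} (h : a + k = p - 1) : binomialPowerSum p a k ≠ 0 := by
  have hk : k < p := by have := (Fact.out : p.Prime).pos; omega
  have hsum := factorial_mul_binomialPowerSum (p := p) a (k := k)
  rw [sum_pow_mul_prod_sub_natCast a k (by rw [ZMod.card]; omega),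
    if_pos (by rw [ZMod.card]; omega)] at hsum
  intro h0
  rw [h0, mul_zero] at hsum
  exact one_ne_zero (neg_eq_zero.mp hsum.symm)

end Psi

lemma sum_sub_val_add_sum_val {p m : ℕ} (κ : Fin m → Fin p) :
    ∑ l, (p - 1 - κ l) + ∑ l, (κ l : ℕ) = m * (p - 1) := by
  rw [← sum_add_distrib,
    sum_congr rfl fun l _ => Nat.sub_add_cancel (Nat.le_sub_one_of_lt (κ l).2),
    sum_const, card_univ, Fintype.card_fin, smul_eq_mul]

lemma setOf_lt_and_sum_le_eq_image {p m : ℕ} (hp : 0 < p) (ω : ℕ) :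
    {a : Fin m → ℕ | (∀ l, a l < p) ∧ ∑ l, a l ≤ ω}
      = (fun κ : Fin m → Fin p => fun l => p - 1 - (κ l : ℕ)) ''
          {κ | m * (p - 1) - ω ≤ ∑ l, (κ l : ℕ)} := by
  ext a
  constructor
  · rintro ⟨ha, hω⟩
    obtain ⟨κ, hκ⟩ : ∃ κ : Fin m → Fin p, ∀ l, (κ l : ℕ) = p - 1 - a l :=
      ⟨fun l => ⟨p - 1 - a l, by omega⟩, fun _ => rfl⟩
    have hreflect : (fun l => p - 1 - (κ l : ℕ)) = a :=
      funext fun l => by have := ha l; rw [hκ]; omega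
    refine ⟨κ, ?_, hreflect⟩
    have hsum : ∑ l, a l = ∑ l, (p - 1 - (κ l : ℕ)) := by rw [hreflect]
    have := sum_sub_val_add_sum_val κ
    show m * (p - 1) - ω ≤ ∑ l, (κ l : ℕ)
    omega
  · rintro ⟨κ, hκ, rfl⟩
    have := sum_sub_val_add_sum_val κ
    have : m * (p - 1) - ω ≤ ∑ l, (κ l : ℕ) := hκ
    refine ⟨fun l => ?_, ?_⟩
    · show p - 1 - (κ l : ℕ) < p
      omega
    · show ∑ l, (p - 1 - (κ l : ℕ)) ≤ ω
      omega

lemma map_psi_GRM_eq_jenningsSpan {p m : ℕ} [Fact p.Prime] (ω : ℕ) :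
    (GRM (ZMod p) m ω).map (psi p m) = jenningsSpan p m (m * (p - 1) - ω) := by
  rw [GRM_eq_span_monomialFun, ZMod.card, setOf_lt_and_sum_le_eq_image (Fact.out : p.Prime).pos,
    Submodule.map_span, Set.image_image, Set.image_image, jenningsSpan]
  refine span_image_eq_of_triangular _ _
    (fun κ j : Fin m → Fin p => ∏ l, binomialPowerSum p (p - 1 - (κ l : ℕ)) (j l))
    (fun κ => psi_monomialFun p m fun l => p - 1 - (κ l : ℕ))
    (fun κ j hc l => ?_) (fun κ => prod_ne_zero_iff.mpr fun l _ => binomialPowerSum_ne_zero ?_)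
    fun i j hij hi => le_trans hi (sum_le_sum (f := fun l => (i l : ℕ)) fun l _ => hij l)
  · by_contra hlt
    have : (j l : ℕ) < κ l := not_le.mp hlt
    refine hc (prod_eq_zero (mem_univ l) (binomialPowerSum_eq_zero ?_))
    omega
  · have := (κ l).2
    omega

theorem grm_radical_power_general (p m : ℕ) (hp : p.Prime) [NeZero p]
    (ω : ℕ) :
    Submodule.map (psi p m) (GRM (ZMod p) m ω)
        = Submodule.restrictScalars (ZMod p)
            ((Ideal.jacobson (⊥ : Ideal (ModA p m))) ^ (m * (p - 1) - ω))
    ∧ LinearIndependent (ZMod p)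
        (fun i : {i : Fin m → Fin p // m * (p - 1) - ω ≤ ∑ k, (i k : ℕ)} =>
          ∏ l, (xA p m l - 1) ^ ((i.1 l : ℕ)))
    ∧ Submodule.span (ZMod p)
        (Set.range (fun i : {i : Fin m → Fin p // m * (p - 1) - ω ≤ ∑ k, (i k : ℕ)} =>
          ∏ l, (xA p m l - 1) ^ ((i.1 l : ℕ))))
        = Submodule.restrictScalars (ZMod p)
            ((Ideal.jacobson (⊥ : Ideal (ModA p m))) ^ (m * (p - 1) - ω)) := by
  have : Fact p.Prime := ⟨hp⟩
  have hrad :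
      ((Ideal.jacobson (⊥ : Ideal (ModA p m))) ^ (m * (p - 1) - ω)).restrictScalars (ZMod p)
        = jenningsSpan p m (m * (p - 1) - ω) := by
    rw [jacobson_bot_eq_augmentationIdeal, restrictScalars_augmentationIdeal_pow]
  refine ⟨by rw [map_psi_GRM_eq_jenningsSpan, hrad],
    (jennings_linearIndependent p m).comp _ Subtype.val_injective, ?_⟩
  rw [hrad, jenningsSpan, Set.image_eq_range]
  rfl

set_option synthInstance.maxHeartbeats 1000000 in
set_option maxHeartbeats 1000000 in
/-- Berman–Charpin: `ψ(C_ω(m,p)) = P^{m(p-1)-ω}` where `P` is the Jacobson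
radical of `A`, and the Jennings elements with `Σ i_k ≥ m(p-1) − ω` form an
`F_p`-basis of `P^{m(p-1)-ω}`. -/
theorem grm_radical_power (p m : ℕ) (hp : p.Prime) [NeZero p] (hm : 1 ≤ m)
    (ω : ℕ) (hω : ω ≤ m * (p - 1)) :
    Submodule.map (psi p m) (GRM (ZMod p) m ω)
        = Submodule.restrictScalars (ZMod p)
            ((Ideal.jacobson (⊥ : Ideal (ModA p m))) ^ (m * (p - 1) - ω))
    ∧ LinearIndependent (ZMod p)
        (fun i : {i : Fin m → Fin p // m * (p - 1) - ω ≤ ∑ k, (i k : ℕ)} =>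
          ∏ l, (xA p m l - 1) ^ ((i.1 l : ℕ)))
    ∧ Submodule.span (ZMod p)
        (Set.range (fun i : {i : Fin m → Fin p // m * (p - 1) - ω ≤ ∑ k, (i k : ℕ)} =>
          ∏ l, (xA p m l - 1) ^ ((i.1 l : ℕ))))
        = Submodule.restrictScalars (ZMod p)
            ((Ideal.jacobson (⊥ : Ideal (ModA p m))) ^ (m * (p - 1) - ω)) :=
  grm_radical_power_general p m hp ω
end

section
/- Let m ≥ 1 and let d be an integer with 1 ≤ d ≤ m. Then the set { (x_0 − 1)^{i_0} ⋯ (x_{m−1} − 1)^{i_{m−1}} + 1̂ : i_k ∈ {0,1} for all k, and m − d ≤ Σ_{k=0}^{m−1} i_k < m } is an F_2-linear basis of ψ(HRMC_d(m,2)), the image in A of the binary homogeneous Reed–Muller code of order d under the identification ψ. -/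
open MvPolynomial

/-!
With `y_l = x_l - 1` we have `y_l ^ 2 = 0`, and the substitution `X ↦ X + 1` maps `A` onto
`F_2[X]/(X_l ^ 2)`, in which the square-free monomials are linearly independent; hence so are the
`y^U`, and since `1̂ = y^{[m]}`, so are the `y^U + 1̂` with `U ≠ [m]`.

For the span, `ψ` sends the evaluation of `∏_{l ∈ W} (1 + Y_l)`, the indicator function of
`{P | P_l = 0 for l ∈ W}`, to `y^{Wᶜ}`, so the family is the image of the evaluations of
`∏_{l ∈ W} (1 + Y_l) + 1` with `W` nonempty and `|W| ≤ d`. Over `F_2` the code `HRMC_d` is spanned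
by the evaluations of the square-free monomials `Y^S` with `S` nonempty and `|S| ≤ d` (raise one
exponent to reach degree `d`), and in characteristic two each of the two families is the sum of the
other over nonempty subsets, so they span the same space.
-/

open Finset

theorem LinearIndependent.comp_add_of_forall_ne {ι κ R M : Type*} [Ring R] [AddCommGroup M]
    [Module R M] {v : ι → M} (hv : LinearIndependent R v) {f : κ → ι}
    (hf : Function.Injective f) {j : ι} (hj : ∀ k, f k ≠ j) :
    LinearIndependent R (fun k => v (f k) + v j) := by
  classical
  have hw := (linearIndependent_add_smul_iff (c := fun i => if i = j then 0 else 1) (i := j)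
    (by simp)).2 hv
  convert hw.comp f hf using 1
  ext k
  simp [hj k]

theorem Finsupp.card_support_le_degree {σ : Type*} (a : σ →₀ ℕ) :
    a.support.card ≤ a.degree := by
  calc a.support.card = ∑ l ∈ a.support, 1 := Finset.card_eq_sum_ones _
    _ ≤ ∑ l ∈ a.support, a l :=
      Finset.sum_le_sum fun l hl => Nat.one_le_iff_ne_zero.2 (mem_support_iff.1 hl)
    _ = a.degree := (degree_apply a).symm

theorem ZMod.sum_univ_two {M : Type*} [AddCommMonoid M] (f : ZMod 2 → M) :
    ∑ a, f a = f 0 + f 1 :=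
  Fin.sum_univ_two f

theorem pow_eq_self_of_zmod_two (x : ZMod 2) {k : ℕ} (hk : k ≠ 0) : x ^ k = x :=
  IsIdempotentElem.pow_eq ((sq x).symm.trans (ZMod.pow_card x)) hk

theorem sub_one_eq_add_one_of_zmod_two {A : Type*} [Ring A] [Algebra (ZMod 2) A] (x : A) :
    x - 1 = x + 1 := by
  rw [sub_eq_add_neg, ← map_one (algebraMap (ZMod 2) A), ← map_neg]
  rfl

theorem Fin.val_two_eq_ite (a : Fin 2) : (a : ℕ) = if a ≠ 0 then 1 else 0 := by
  fin_cases a <;> rfl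

theorem prod_pow_val_fin_two {ι M : Type*} [Fintype ι] [CommMonoid M] (f : ι → M)
    (i : ι → Fin 2) : ∏ l, f l ^ (i l : ℕ) = ∏ l ∈ univ.filter (i · ≠ 0), f l := by
  rw [prod_filter]
  exact prod_congr rfl fun l _ => by rw [Fin.val_two_eq_ite]; split_ifs <;> simp

theorem sum_val_fin_two {ι : Type*} [Fintype ι] (i : ι → Fin 2) :
    ∑ l, (i l : ℕ) = (univ.filter (i · ≠ 0)).card := by
  rw [card_filter]
  exact sum_congr rfl fun l _ => Fin.val_two_eq_ite _

section CharTwo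

variable {R ι : Type*} [CommRing R] [CharP R 2] [DecidableEq ι] (f : ι → R)

theorem prod_one_add_add_one_eq_sum_powerset_erase (s : Finset ι) :
    ∏ i ∈ s, (1 + f i) + 1 = ∑ t ∈ s.powerset.erase ∅, ∏ i ∈ t, f i := by
  rw [prod_one_add, ← sum_erase_add _ _ (empty_mem_powerset s), prod_empty, add_assoc,
    CharTwo.add_self_eq_zero, add_zero]

theorem prod_eq_sum_powerset_erase_prod_one_add_add_one {s : Finset ι} (hs : s.Nonempty) :
    ∏ i ∈ s, f i = ∑ t ∈ s.powerset.erase ∅, (∏ i ∈ t, (1 + f i) + 1) := by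
  have hcard : (2 ^ s.card : R) = 0 := by
    rw [CharTwo.two_eq_zero, zero_pow hs.card_pos.ne']
  rw [sum_erase _ (by rw [prod_empty, CharTwo.add_self_eq_zero]), sum_add_distrib, sum_const,
    card_powerset, nsmul_one, Nat.cast_pow, Nat.cast_ofNat, hcard, add_zero, ← prod_one_add]
  refine prod_congr rfl fun i _ => ?_
  rw [← add_assoc, CharTwo.add_self_eq_zero, zero_add]

theorem span_image_prod_one_add_add_one {S : Type*} [Semiring S] [Module S R] (d : ℕ) :
    Submodule.span S
        ((fun W => ∏ i ∈ W, (1 + f i) + 1) '' {W : Finset ι | W.Nonempty ∧ W.card ≤ d}) =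
      Submodule.span S ((fun W => ∏ i ∈ W, f i) '' {W | W.Nonempty ∧ W.card ≤ d}) := by
  have key : ∀ g h : Finset ι → R,
      (∀ W : Finset ι, W.Nonempty → g W = ∑ t ∈ W.powerset.erase ∅, h t) →
      Submodule.span S (g '' {W | W.Nonempty ∧ W.card ≤ d}) ≤
        Submodule.span S (h '' {W | W.Nonempty ∧ W.card ≤ d}) := by
    intro g h hgh
    rw [Submodule.span_le]
    rintro _ ⟨W, ⟨hW, hWd⟩, rfl⟩
    rw [hgh W hW]
    refine Submodule.sum_mem _ fun t ht => ?_
    obtain ⟨ht, htW⟩ := mem_erase.1 ht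
    exact Submodule.subset_span
      ⟨t, ⟨nonempty_iff_ne_empty.2 ht, (card_le_card (mem_powerset.1 htW)).trans hWd⟩, rfl⟩
  exact le_antisymm (key _ _ fun W _ => prod_one_add_add_one_eq_sum_powerset_erase f W)
    (key _ _ fun W hW => prod_eq_sum_powerset_erase_prod_one_add_add_one f hW)

end CharTwo

theorem MvPolynomial.linearIndependent_mk_prod_X_pow {σ R : Type*} [Fintype σ] [CommRing R]
    (n : ℕ) :
    LinearIndependent R (fun i : σ → Fin n =>
      Ideal.Quotient.mk (Ideal.span (Set.range fun l : σ => (X l : MvPolynomial σ R) ^ n))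
        (∏ l, X l ^ (i l : ℕ))) := by
  classical
  set e : (σ → Fin n) → σ →₀ ℕ := fun i => Finsupp.equivFunOnFinite.symm fun l => i l
  have he : Function.Injective e := by
    intro i j h
    funext l
    exact Fin.ext (by simpa [e] using DFunLike.congr_fun h l)
  have hmonomial : ∀ i, ∏ l, (X l : MvPolynomial σ R) ^ (i l : ℕ) = monomial (e i) 1 := by
    intro i
    rw [monomial_eq, C_1, one_mul, Finsupp.prod_fintype _ _ (fun _ => pow_zero _)]
    rfl
  have hspan : (Set.range fun l => (X l : MvPolynomial σ R) ^ n) =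
      (fun s => monomial s 1) '' Set.range fun l => Finsupp.single l n := by
    rw [← Set.range_comp]
    simp [Function.comp_def, X_pow_eq_monomial]
  rw [Fintype.linearIndependent_iff]
  intro g hg i
  by_contra hi
  have hmem : ∑ j, monomial (e j) (g j) ∈
      Ideal.span ((fun s => monomial s (1 : R)) '' Set.range fun l => Finsupp.single l n) := by
    rw [← hspan, ← Ideal.Quotient.eq_zero_iff_mem, ← hg, map_sum]
    refine sum_congr rfl fun j _ => ?_
    rw [hmonomial, ← Ideal.Quotient.mkₐ_eq_mk R, ← map_smul, smul_monomial, smul_eq_mul,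
      mul_one]
  have hcoeff : coeff (e i) (∑ j, monomial (e j) (g j)) = g i := by
    simp [coeff_sum, coeff_monomial, he.eq_iff]
  obtain ⟨_, ⟨l, rfl⟩, hle⟩ :=
    mem_ideal_span_monomial_image.1 hmem (e i) (mem_support_iff.2 (hcoeff ▸ hi))
  exact not_le.2 (i l).isLt (by simpa [e] using hle l)

theorem evalₗ_monomial_one_zmod_two {σ : Type*} (a : σ →₀ ℕ) :
    evalₗ (ZMod 2) σ (monomial a 1) = evalₗ (ZMod 2) σ (∏ l ∈ a.support, X l) := by
  ext P
  simp only [evalₗ_apply, eval_monomial, one_mul, Finsupp.prod, eval_prod, eval_X]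
  exact prod_congr rfl fun l hl => pow_eq_self_of_zmod_two _ (Finsupp.mem_support_iff.1 hl)

theorem HRMC_zmod_two_eq_map_span_prod_X {m d : ℕ} (hd : 1 ≤ d) :
    HRMC (ZMod 2) m d = (Submodule.span (ZMod 2) ((fun S => ∏ l ∈ S, X l) ''
      {S : Finset (Fin m) | S.Nonempty ∧ S.card ≤ d})).map (evalₗ (ZMod 2) (Fin m)) := by
  rw [Submodule.map_span, ← Set.image_comp]
  refine le_antisymm (Submodule.span_le.2 ?_) (Submodule.span_le.2 ?_)
  · rintro _ ⟨f, hf, rfl⟩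
    have hf' := (mem_homogeneousSubmodule d f).2 hf
    rw [homogeneousSubmodule_eq_finsupp_supported, AddMonoidAlgebra.supported_eq_span_single] at hf'
    have := Submodule.mem_map_of_mem (f := evalₗ (ZMod 2) (Fin m)) hf'
    rw [Submodule.map_span, ← Set.image_comp] at this
    refine Submodule.span_mono ?_ this
    rintro _ ⟨a, ha : a.degree = d, rfl⟩
    refine ⟨a.support, ⟨?_, ha ▸ a.card_support_le_degree⟩,
      (evalₗ_monomial_one_zmod_two a).symm⟩
    rw [Finsupp.support_nonempty_iff, ne_eq, ← (Finsupp.degree_eq_zero_iff a).not, ha]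
    omega
  · rintro _ ⟨S, ⟨⟨l₀, hl₀⟩, hS⟩, rfl⟩
    refine Submodule.subset_span ⟨X l₀ ^ (d - S.card) * ∏ l ∈ S, X l, ?_, ?_⟩
    · have := (isHomogeneous_X_pow l₀ (d - S.card)).mul
        (IsHomogeneous.prod S _ (fun _ => 1) fun l _ => isHomogeneous_X (ZMod 2) l)
      simpa [Nat.sub_add_cancel hS] using this
    · ext P
      simp only [Function.comp_apply, evalₗ_apply, eval_mul, eval_pow, eval_prod, eval_X]
      rw [← mul_prod_erase S _ hl₀, ← mul_assoc, ← pow_succ,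
        pow_eq_self_of_zmod_two _ (by omega)]

theorem linearIndependent_prod_xA_sub_one_pow (p m : ℕ) [Fact p.Prime] :
    LinearIndependent (ZMod p)
      (fun i : Fin m → Fin p => ∏ l, (xA p m l - 1) ^ (i l : ℕ)) := by
  set J := Ideal.span (Set.range fun l => (X l : MvPolynomial (Fin m) (ZMod p)) ^ p)
  set shift : MvPolynomial (Fin m) (ZMod p) →ₐ[ZMod p] MvPolynomial (Fin m) (ZMod p) :=
    aeval fun l => X l + 1
  have hle : Aideal p m ≤ J.comap shift := by
    rw [Aideal, Ideal.span_le]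
    rintro _ ⟨l, rfl⟩
    rw [SetLike.mem_coe, Ideal.mem_comap, map_sub, map_pow, map_one, aeval_X, add_pow_char,
      one_pow, add_sub_cancel_right]
    exact Ideal.subset_span ⟨l, rfl⟩
  have hcomp : (Ideal.quotientMapₐ J shift hle).toLinearMap ∘
      (fun i : Fin m → Fin p => ∏ l, (xA p m l - 1) ^ (i l : ℕ)) =
      fun i => Ideal.Quotient.mk J (∏ l, X l ^ (i l : ℕ)) := by
    ext i
    simp [xA, shift, map_prod]
  exact .of_comp _ (hcomp ▸ linearIndependent_mk_prod_X_pow p)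

theorem psi_apply (p m : ℕ) [NeZero p] (c : (Fin m → ZMod p) → ZMod p) :
    psi p m c = ∑ j : Fin m → ZMod p, c j • ∏ l, (xA p m l) ^ (j l).val :=
  rfl

theorem psi_prod_apply {p m : ℕ} [NeZero p] (g : Fin m → ZMod p → ZMod p) :
    psi p m (fun P => ∏ l, g l (P l)) = ∏ l, ∑ a, g l a • xA p m l ^ a.val := by
  rw [psi_apply, prod_univ_sum, Fintype.piFinset_univ]
  simp_rw [prod_smul]

theorem psi_evalₗ_prod_one_add_X {m : ℕ} (W : Finset (Fin m)) :
    psi 2 m (evalₗ (ZMod 2) (Fin m) (∏ l ∈ W, (1 + X l))) = bElt m Wᶜ := by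
  classical
  have heval : evalₗ (ZMod 2) (Fin m) (∏ l ∈ W, (1 + X l)) =
      fun P => ∏ l, if l ∈ W then 1 + P l else 1 := by
    ext P
    simp [prod_ite_mem]
  rw [heval, psi_prod_apply (fun l a => if l ∈ W then 1 + a else 1), bElt, ← univ_inter Wᶜ,
    ← prod_ite_mem]
  refine prod_congr rfl fun l _ => ?_
  by_cases hl : l ∈ W
  · simp [hl, ZMod.sum_univ_two, ZMod.val_one, show (1 + 1 : ZMod 2) = 0 from rfl]
  · simp [hl, ZMod.sum_univ_two, ZMod.val_one, sub_one_eq_add_one_of_zmod_two, add_comm]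

theorem psi_evalₗ_one {m : ℕ} : psi 2 m (evalₗ (ZMod 2) (Fin m) 1) = bElt m univ := by
  simpa using psi_evalₗ_prod_one_add_X (m := m) ∅

theorem psi_evalₗ_prod_one_add_X_add_one {m : ℕ} (W : Finset (Fin m)) :
    psi 2 m (evalₗ (ZMod 2) (Fin m) (∏ l ∈ W, (1 + X l) + 1)) =
      bElt m Wᶜ + bElt m univ := by
  rw [map_add, map_add, psi_evalₗ_prod_one_add_X, psi_evalₗ_one]

theorem range_prod_xA_sub_one_pow_add (m d : ℕ) :
    Set.range
        (fun i : {i : Fin m → Fin 2 // m - d ≤ ∑ k, (i k : ℕ) ∧ ∑ k, (i k : ℕ) < m} =>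
          (∏ l, (xA 2 m l - 1) ^ ((i.1 l : ℕ))) + ∏ l, (xA 2 m l - 1)) =
    (fun W => bElt m Wᶜ + bElt m univ) '' {W | W.Nonempty ∧ W.card ≤ d} := by
  ext v
  constructor
  · rintro ⟨⟨i, hlo, hlt⟩, rfl⟩
    have hcompl : (univ.filter (i · = 0))ᶜ = univ.filter (i · ≠ 0) := by ext; simp
    have hcard := card_filter_add_card_filter_not (s := univ) (fun l => i l = 0)
    simp only [sum_val_fin_two, ne_eq] at hlo hlt
    simp only [card_univ, Fintype.card_fin] at hcard
    refine ⟨univ.filter (i · = 0), ⟨card_pos.1 (by omega), by omega⟩, ?_⟩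
    simp only [bElt, hcompl, prod_pow_val_fin_two]
  · rintro ⟨W, ⟨hne, hcard⟩, rfl⟩
    set i : Fin m → Fin 2 := fun l => if l ∈ W then 0 else 1
    have hi : univ.filter (i · ≠ 0) = Wᶜ := by ext l; by_cases hl : l ∈ W <;> simp [i, hl]
    have hW : W.card ≤ m := card_le_univ W |>.trans_eq (Fintype.card_fin m)
    refine ⟨⟨i, ?_⟩, ?_⟩
    · rw [sum_val_fin_two, hi, card_compl, Fintype.card_fin]
      have := card_pos.2 hne
      omega
    · simp only [prod_pow_val_fin_two, hi, bElt]

theorem hrmc_jennings_basis_general (m d : ℕ) (hd1 : 1 ≤ d) :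
    LinearIndependent (ZMod 2)
      (fun i : {i : Fin m → Fin 2 // m - d ≤ ∑ k, (i k : ℕ) ∧ ∑ k, (i k : ℕ) < m} =>
        (∏ l, (xA 2 m l - 1) ^ ((i.1 l : ℕ))) + ∏ l, (xA 2 m l - 1))
    ∧ Submodule.span (ZMod 2)
        (Set.range (fun i : {i : Fin m → Fin 2 // m - d ≤ ∑ k, (i k : ℕ) ∧ ∑ k, (i k : ℕ) < m} =>
          (∏ l, (xA 2 m l - 1) ^ ((i.1 l : ℕ))) + ∏ l, (xA 2 m l - 1)))
        = Submodule.map (psi 2 m) (HRMC (ZMod 2) m d) := by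
  constructor
  · have hne : ∀ i : {i : Fin m → Fin 2 // m - d ≤ ∑ k, (i k : ℕ) ∧ ∑ k, (i k : ℕ) < m},
        i.1 ≠ fun _ => 1 := by
      rintro ⟨i, -, hlt⟩ rfl
      simp at hlt
    simpa using (linearIndependent_prod_xA_sub_one_pow 2 m).comp_add_of_forall_ne
      Subtype.val_injective hne
  · set E := (psi 2 m).comp (evalₗ (ZMod 2) (Fin m))
    calc Submodule.span (ZMod 2) _
        = Submodule.span (ZMod 2) (E '' ((fun W => ∏ l ∈ W, (1 + X l) + 1) ''
            {W : Finset (Fin m) | W.Nonempty ∧ W.card ≤ d})) := by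
          rw [range_prod_xA_sub_one_pow_add, ← Set.image_comp]
          simp only [E, Function.comp_def, LinearMap.coe_comp, psi_evalₗ_prod_one_add_X_add_one]
      _ = Submodule.map E (Submodule.span (ZMod 2) ((fun W => ∏ l ∈ W, X l) ''
            {W : Finset (Fin m) | W.Nonempty ∧ W.card ≤ d})) := by
          rw [← Submodule.map_span, span_image_prod_one_add_add_one]
      _ = Submodule.map (psi 2 m) (HRMC (ZMod 2) m d) := by
          rw [HRMC_zmod_two_eq_map_span_prod_X hd1, Submodule.map_comp]

/-- the elements `(x_0-1)^{i_0} ⋯ (x_{m-1}-1)^{i_{m-1}} + 1̂` with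
`m - d ≤ Σ i_k < m` form an `F_2`-basis of `ψ(HRMC_d(m,2))`, where
`1̂ = (x_0-1)⋯(x_{m-1}-1)` is the all-one word. -/
theorem hrmc_jennings_basis (m d : ℕ) (hm : 1 ≤ m) (hd1 : 1 ≤ d) (hd2 : d ≤ m) :
    LinearIndependent (ZMod 2)
      (fun i : {i : Fin m → Fin 2 // m - d ≤ ∑ k, (i k : ℕ) ∧ ∑ k, (i k : ℕ) < m} =>
        (∏ l, (xA 2 m l - 1) ^ ((i.1 l : ℕ))) + ∏ l, (xA 2 m l - 1))
    ∧ Submodule.span (ZMod 2)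
        (Set.range (fun i : {i : Fin m → Fin 2 // m - d ≤ ∑ k, (i k : ℕ) ∧ ∑ k, (i k : ℕ) < m} =>
          (∏ l, (xA 2 m l - 1) ^ ((i.1 l : ℕ))) + ∏ l, (xA 2 m l - 1)))
        = Submodule.map (psi 2 m) (HRMC (ZMod 2) m d) :=
  hrmc_jennings_basis_general m d hd1
end
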